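/- arXiv:2511.23153 — 2 statements merged into one kernel-verified Lean document; each statement's English description precedes it below -/
import Mathlib

section
/- Let h, Z : ℝ³ → ℝ be continuously differentiable functions of (t,x,y) with h > 0 everywhere, and let a, b, c : ℝ⁴ → ℝ be continuously differentiable functions of (t,x,y,z) satisfying the divergence-free condition ∂_x a + ∂_y b + ∂_z c = 0 everywhere. Assume the zero-outward-normal magnetic boundary conditions: at z = h+Z, c = a·∂_x(h+Z) + b·∂_y(h+Z), and at z = Z, c = a·∂_x Z + b·∂_y Z (with a, b, c evaluated at the corresponding z). Then for all (t,x,y): ∂_x( ∫_{Z}^{h+Z} a(t,x,y,z) dz ) + ∂_y( ∫_{Z}^{h+Z} b(t,x,y,z) dz ) = 0. -/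
open intervalIntegral MeasureTheory Set Asymptotics
open scoped Interval

/-!
Differentiate both depth integrals by Leibniz's rule. The interior terms add up to
`∫ (∂ₓa + ∂ᵧb) dz = -∫ ∂_z c dz = c(bottom) - c(surface)`, while by the two boundary
conditions the boundary terms `a ∂ₓ(h+Z) + b ∂ᵧ(h+Z)` at the surface minus `a ∂ₓZ + b ∂ᵧZ`
at the bottom are exactly `c(surface) - c(bottom)`.
-/

section

variable {X E : Type*} [NormedAddCommGroup X] [NormedSpace ℝ X]
  [NormedAddCommGroup E] [NormedSpace ℝ E]

theorem ContDiff.deriv_fst_eq_fderiv {g : ℝ × ℝ → E} (hg : ContDiff ℝ 1 g) (x z : ℝ) :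
    deriv (fun x' => g (x', z)) x = fderiv ℝ g (x, z) (1, 0) :=
  ((hg.differentiable one_ne_zero _).hasFDerivAt.comp_hasDerivAt x
    ((hasDerivAt_id x).prodMk (hasDerivAt_const x z))).deriv

theorem ContDiff.continuous_deriv_fst {g : ℝ × ℝ → E} (hg : ContDiff ℝ 1 g) :
    Continuous fun p : ℝ × ℝ => deriv (fun x => g (x, p.2)) p.1 := by
  simp only [hg.deriv_fst_eq_fderiv]
  exact (hg.continuous_fderiv one_ne_zero).clm_apply continuous_const

theorem ContDiff.hasDerivAt_intervalIntegral_param {g : ℝ × ℝ → E} (hg : ContDiff ℝ 1 g)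
    (a b x₀ : ℝ) :
    HasDerivAt (fun x => ∫ z in a..b, g (x, z))
      (∫ z in a..b, deriv (fun x => g (x, z)) x₀) x₀ := by
  obtain ⟨C, hC⟩ := ((isCompact_closedBall x₀ 1).prod (isCompact_uIcc (a := a) (b := b))
    ).exists_bound_of_continuousOn hg.continuous_deriv_fst.continuousOn
  refine (hasDerivAt_integral_of_dominated_loc_of_deriv_le (F := fun x z => g (x, z))
    (F' := fun x z => deriv (fun x => g (x, z)) x) (μ := volume) (bound := fun _ => C)
    (Metric.ball_mem_nhds x₀ one_pos) (.of_forall fun x => ?_) ?_ ?_ ?_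
    intervalIntegrable_const (.of_forall fun z _ x _ => ?_)).2
  · exact (hg.continuous.comp (by fun_prop)).aestronglyMeasurable
  · exact (hg.continuous.comp (by fun_prop)).intervalIntegrable _ _
  · exact (hg.continuous_deriv_fst.comp₂ continuous_const continuous_id).aestronglyMeasurable
  · exact .of_forall fun z hz x hx =>
      hC (x, z) ⟨Metric.ball_subset_closedBall hx, uIoc_subset_uIcc hz⟩
  · exact ((hg.differentiable one_ne_zero).comp (by fun_prop) x).hasDerivAt

variable [CompleteSpace E]

/-- The integral vanishes identically on the line `p.2 = w₀`, so mere continuity of `g` gives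
joint differentiability there. -/
theorem hasFDerivAt_parametric_primitive_at_base {g : X × ℝ → E} (hg : Continuous g)
    (x₀ : X) (w₀ : ℝ) :
    HasFDerivAt (fun p : X × ℝ => ∫ z in w₀..p.2, g (p.1, z))
      ((ContinuousLinearMap.snd ℝ X ℝ).smulRight (g (x₀, w₀))) (x₀, w₀) := by
  refine .of_isLittleO <| isLittleO_iff.2 fun ε hε => ?_
  obtain ⟨δ, hδ, hgδ⟩ := Metric.continuousAt_iff.1 hg.continuousAt ε hε
  filter_upwards [Metric.ball_mem_nhds _ hδ] with p hp
  have hclose : ∀ z ∈ Ι w₀ p.2, ‖g (p.1, z) - g (x₀, w₀)‖ ≤ ε := fun z hz => by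
    rw [← dist_eq_norm]
    refine (hgδ (x := (p.1, z)) (lt_of_le_of_lt ?_ hp)).le
    rw [Prod.dist_eq, Prod.dist_eq]
    refine max_le_max le_rfl ?_
    simpa only [dist_comm] using Real.dist_left_le_of_mem_uIcc (uIoc_subset_uIcc hz)
  calc ‖(∫ z in w₀..p.2, g (p.1, z)) - (∫ z in w₀..(x₀, w₀).2, g ((x₀, w₀).1, z))
        - ((ContinuousLinearMap.snd ℝ X ℝ).smulRight (g (x₀, w₀))) (p - (x₀, w₀))‖
      = ‖∫ z in w₀..p.2, (g (p.1, z) - g (x₀, w₀))‖ := by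
        rw [integral_sub ((by fun_prop : Continuous fun z => g (p.1, z)).intervalIntegrable _ _)
          intervalIntegrable_const]
        simp [intervalIntegral.integral_const]
    _ ≤ ε * |p.2 - w₀| := norm_integral_le_of_norm_le_const hclose
    _ ≤ ε * ‖p - (x₀, w₀)‖ := by
        gcongr
        exact norm_snd_le (p - (x₀, w₀))

theorem ContDiff.hasDerivAt_intervalIntegral {g : ℝ × ℝ → E} (hg : ContDiff ℝ 1 g)
    {u v : ℝ → ℝ} {u' v' x₀ : ℝ} (hu : HasDerivAt u u' x₀) (hv : HasDerivAt v v' x₀) :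
    HasDerivAt (fun x => ∫ z in u x..v x, g (x, z))
      ((∫ z in u x₀..v x₀, deriv (fun x => g (x, z)) x₀)
        + v' • g (x₀, v x₀) - u' • g (x₀, u x₀)) x₀ := by
  have hint (x α β : ℝ) : IntervalIntegrable (fun z => g (x, z)) volume α β :=
    (hg.continuous.comp (by fun_prop)).intervalIntegrable _ _
  have hsplit : (fun x => ∫ z in u x..v x, g (x, z)) = fun x =>
      (∫ z in u x₀..v x₀, g (x, z)) + (∫ z in v x₀..v x, g (x, z))
        - ∫ z in u x₀..u x, g (x, z) := by
    funext x
    rw [add_sub_assoc, ← integral_interval_sub_interval_comm' (hint ..) (hint ..) (hint ..)]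
    abel
  have hbase (w : ℝ → ℝ) (w' : ℝ) (hw : HasDerivAt w w' x₀) :
      HasDerivAt (fun x => ∫ z in w x₀..w x, g (x, z)) (w' • g (x₀, w x₀)) x₀ := by
    simpa [Function.comp_def] using
      (hasFDerivAt_parametric_primitive_at_base hg.continuous x₀ (w x₀)).comp_hasDerivAt x₀
        ((hasDerivAt_id x₀).prodMk hw)
  rw [hsplit]
  exact ((hg.hasDerivAt_intervalIntegral_param _ _ x₀).add (hbase v v' hv)).sub (hbase u u' hu)

end

theorem depth_averaged_divergence_free_general
    (h Z : ℝ × ℝ × ℝ → ℝ) (a b c : ℝ × ℝ × ℝ × ℝ → ℝ)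
    (hC1 : ContDiff ℝ 1 h) (ZC1 : ContDiff ℝ 1 Z)
    (aC1 : ContDiff ℝ 1 a) (bC1 : ContDiff ℝ 1 b) (cC1 : ContDiff ℝ 1 c)
    (divfree : ∀ t x y z : ℝ,
      deriv (fun x' => a (t, x', y, z)) x
        + deriv (fun y' => b (t, x, y', z)) y
        + deriv (fun z' => c (t, x, y, z')) z = 0)
    (bc_surface : ∀ t x y : ℝ,
      c (t, x, y, h (t, x, y) + Z (t, x, y))
        = a (t, x, y, h (t, x, y) + Z (t, x, y)) *
            deriv (fun x' => h (t, x', y) + Z (t, x', y)) x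
          + b (t, x, y, h (t, x, y) + Z (t, x, y)) *
            deriv (fun y' => h (t, x, y') + Z (t, x, y')) y)
    (bc_bottom : ∀ t x y : ℝ,
      c (t, x, y, Z (t, x, y))
        = a (t, x, y, Z (t, x, y)) * deriv (fun x' => Z (t, x', y)) x
          + b (t, x, y, Z (t, x, y)) * deriv (fun y' => Z (t, x, y')) y) :
    ∀ t x y : ℝ,
      deriv
          (fun x' =>
            ∫ z in Z (t, x', y)..(h (t, x', y) + Z (t, x', y)),
              a (t, x', y, z)) x
        + deriv
            (fun y' =>
              ∫ z in Z (t, x, y')..(h (t, x, y') + Z (t, x, y')),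
                b (t, x, y', z)) y
        = 0 := by
  intro t x y
  have h_diff := hC1.differentiable one_ne_zero
  have Z_diff := ZC1.differentiable one_ne_zero
  have a_slice : ContDiff ℝ 1 fun p : ℝ × ℝ => a (t, p.1, y, p.2) := aC1.comp (by fun_prop)
  have b_slice : ContDiff ℝ 1 fun p : ℝ × ℝ => b (t, x, p.1, p.2) := bC1.comp (by fun_prop)
  have c_slice : ContDiff ℝ 1 fun z => c (t, x, y, z) := cC1.comp (by fun_prop)
  have a_cont : Continuous fun z => deriv (fun x' => a (t, x', y, z)) x :=
    a_slice.continuous_deriv_fst.comp₂ continuous_const continuous_id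
  have b_cont : Continuous fun z => deriv (fun y' => b (t, x, y', z)) y :=
    b_slice.continuous_deriv_fst.comp₂ continuous_const continuous_id
  have hflux (B T : ℝ) : (∫ z in B..T, deriv (fun x' => a (t, x', y, z)) x)
      + (∫ z in B..T, deriv (fun y' => b (t, x, y', z)) y)
        = c (t, x, y, B) - c (t, x, y, T) := by
    rw [← integral_add (a_cont.intervalIntegrable _ _) (b_cont.intervalIntegrable _ _),
      integral_congr fun z _ => eq_neg_of_add_eq_zero_left (divfree t x y z),
      intervalIntegral.integral_neg,
      integral_deriv_eq_sub (fun z _ => c_slice.differentiable one_ne_zero z)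
        ((c_slice.continuous_deriv le_rfl).intervalIntegrable _ _), neg_sub]
  have hx := a_slice.hasDerivAt_intervalIntegral
    (u := fun x' => Z (t, x', y)) (v := fun x' => h (t, x', y) + Z (t, x', y))
    (by fun_prop : DifferentiableAt ℝ _ x).hasDerivAt
    (by fun_prop : DifferentiableAt ℝ _ x).hasDerivAt
  have hy := b_slice.hasDerivAt_intervalIntegral
    (u := fun y' => Z (t, x, y')) (v := fun y' => h (t, x, y') + Z (t, x, y'))
    (by fun_prop : DifferentiableAt ℝ _ y).hasDerivAt
    (by fun_prop : DifferentiableAt ℝ _ y).hasDerivAt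
  rw [hx.deriv, hy.deriv]
  simp only [smul_eq_mul]
  linarith [hflux (Z (t, x, y)) (h (t, x, y) + Z (t, x, y)), bc_surface t x y, bc_bottom t x y]

/-- The depth-averaged divergence-free condition of the magnetic
field.  For a divergence-free magnetic field `(a,b,c)` with zero outward
normal component at the surface `z = h+Z` and the bottom `z = Z`, one has
`∂_x(∫_Z^{h+Z} a dz) + ∂_y(∫_Z^{h+Z} b dz) = 0`. -/
theorem depth_averaged_divergence_free
    (h Z : ℝ × ℝ × ℝ → ℝ) (a b c : ℝ × ℝ × ℝ × ℝ → ℝ)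
    (hC1 : ContDiff ℝ 1 h) (ZC1 : ContDiff ℝ 1 Z)
    (hpos : ∀ p : ℝ × ℝ × ℝ, 0 < h p)
    (aC1 : ContDiff ℝ 1 a) (bC1 : ContDiff ℝ 1 b) (cC1 : ContDiff ℝ 1 c)
    (divfree : ∀ t x y z : ℝ,
      deriv (fun x' => a (t, x', y, z)) x
        + deriv (fun y' => b (t, x, y', z)) y
        + deriv (fun z' => c (t, x, y, z')) z = 0)
    (bc_surface : ∀ t x y : ℝ,
      c (t, x, y, h (t, x, y) + Z (t, x, y))
        = a (t, x, y, h (t, x, y) + Z (t, x, y)) *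
            deriv (fun x' => h (t, x', y) + Z (t, x', y)) x
          + b (t, x, y, h (t, x, y) + Z (t, x, y)) *
            deriv (fun y' => h (t, x, y') + Z (t, x, y')) y)
    (bc_bottom : ∀ t x y : ℝ,
      c (t, x, y, Z (t, x, y))
        = a (t, x, y, Z (t, x, y)) * deriv (fun x' => Z (t, x', y)) x
          + b (t, x, y, Z (t, x, y)) * deriv (fun y' => Z (t, x, y')) y) :
    ∀ t x y : ℝ,
      deriv
          (fun x' =>
            ∫ z in Z (t, x', y)..(h (t, x', y) + Z (t, x', y)),
              a (t, x', y, z)) x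
        + deriv
            (fun y' =>
              ∫ z in Z (t, x, y')..(h (t, x, y') + Z (t, x, y')),
                b (t, x, y', z)) y
        = 0 :=
  depth_averaged_divergence_free_general h Z a b c hC1 ZC1 aC1 bC1 cC1 divfree bc_surface bc_bottom
end

section
/- Let h : ℝ² → ℝ be continuously differentiable with h > 0, let u, v, a, b : ℝ³ → ℝ be continuously differentiable functions of (x,y,ζ), and let ψ : ℝ³ → ℝ be continuously differentiable. Define u_m(x,y) = ∫₀¹ u(x,y,ζ) dζ and similarly v_m, a_m, b_m; define hω(x,y,ζ) = −∂_x[ h·∫₀^ζ (u − u_m) ds ] − ∂_y[ h·∫₀^ζ (v − v_m) ds ] and h𝒞(x,y,ζ) = −∂_x[ h·∫₀^ζ a ds ] − ∂_y[ h·∫₀^ζ b ds ]. Then for all (x,y): (i) ∫₀¹ ∂_ζ[ ψ·hω ](x,y,ζ) dζ = 0, and (ii) ∫₀¹ ∂_ζ[ ψ·h𝒞 ](x,y,ζ) dζ = −ψ(x,y,1)·[ ∂_x(h a_m) + ∂_y(h b_m) ](x,y). -/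
open intervalIntegral

/-- The depth average of a function of `(x,y,ζ)` over `ζ ∈ [0,1]`. -/
noncomputable def depthMean (u : ℝ × ℝ × ℝ → ℝ) (x y : ℝ) : ℝ :=
  ∫ ζ in (0 : ℝ)..1, u (x, y, ζ)

/-- The velocity vertical coupling operator `hω`:
`hω(x,y,ζ) = −∂_x[h·∫₀^ζ (u − u_m) ds] − ∂_y[h·∫₀^ζ (v − v_m) ds]`. -/
noncomputable def hOmega (h : ℝ × ℝ → ℝ) (u v : ℝ × ℝ × ℝ → ℝ)
    (x y ζ : ℝ) : ℝ :=
  - deriv (fun x' =>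
      h (x', y) * ∫ s in (0 : ℝ)..ζ, (u (x', y, s) - depthMean u x' y)) x
  - deriv (fun y' =>
      h (x, y') * ∫ s in (0 : ℝ)..ζ, (v (x, y', s) - depthMean v x y')) y

/-- The magnetic vertical coupling operator `h𝒞`:
`h𝒞(x,y,ζ) = −∂_x[h·∫₀^ζ a ds] − ∂_y[h·∫₀^ζ b ds]`. -/
noncomputable def hMagC (h : ℝ × ℝ → ℝ) (a b : ℝ × ℝ × ℝ → ℝ)
    (x y ζ : ℝ) : ℝ :=
  - deriv (fun x' => h (x', y) * ∫ s in (0 : ℝ)..ζ, a (x', y, s)) x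
  - deriv (fun y' => h (x, y') * ∫ s in (0 : ℝ)..ζ, b (x, y', s)) y

open MeasureTheory Set Metric

/-!
For fixed `(x, y)`, differentiating under the integral turns `∂_x[h ∫₀^ζ f ds]` into the primitive
`∫₀^ζ ∂_x(h f) ds` of a continuous function of `s`, so `ζ ↦ hω` and `ζ ↦ h𝒞` are `C¹` and the
fundamental theorem of calculus reduces both depth integrals to the boundary values of `ψ · hω`
and `ψ · h𝒞`. At `ζ = 0` both operators vanish, the vertical integrals being empty. At `ζ = 1`,
`hω` vanishes because `u - u_m` and `v - v_m` have zero depth mean, while `h𝒞` is exactly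
`-(∂_x(h a_m) + ∂_y(h b_m))`.
-/

section

variable {E : Type*} [NormedAddCommGroup E] [NormedSpace ℝ E]

theorem hasDerivAt_intervalIntegral_of_contDiff {F : ℝ × ℝ → E} (hF : ContDiff ℝ 1 F)
    (a b t₀ : ℝ) :
    HasDerivAt (fun t => ∫ s in a..b, F (t, s)) (∫ s in a..b, fderiv ℝ F (t₀, s) (1, 0)) t₀ := by
  have hF' : Continuous fun p : ℝ × ℝ => fderiv ℝ F p (1, 0) :=
    (hF.continuous_fderiv one_ne_zero).clm_apply continuous_const
  obtain ⟨C, hC⟩ : ∃ C, ∀ p ∈ closedBall t₀ 1 ×ˢ uIcc a b, ‖fderiv ℝ F p (1, 0)‖ ≤ C :=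
    ((isCompact_closedBall t₀ 1).prod isCompact_uIcc).exists_bound_of_continuousOn
      hF'.continuousOn
  refine (hasDerivAt_integral_of_dominated_loc_of_deriv_le (bound := fun _ => C)
    (F' := fun t s => fderiv ℝ F (t, s) (1, 0)) (ball_mem_nhds t₀ one_pos)
    (.of_forall fun t => (by fun_prop : Continuous fun s => F (t, s)).aestronglyMeasurable)
    ((by fun_prop : Continuous fun s => F (t₀, s)).intervalIntegrable a b)
    (by fun_prop : Continuous fun s => fderiv ℝ F (t₀, s) (1, 0)).aestronglyMeasurable
    (.of_forall fun s hs t ht => hC (t, s) ⟨ball_subset_closedBall ht, uIoc_subset_uIcc hs⟩)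
    intervalIntegrable_const (.of_forall fun s _ t _ => ?_)).2
  exact (hF.differentiable one_ne_zero (t, s)).hasFDerivAt.comp_hasDerivAt t
    ((hasDerivAt_id t).prodMk (hasDerivAt_const t s))

theorem contDiff_intervalIntegral_of_contDiff {F : ℝ × ℝ → E} (hF : ContDiff ℝ 1 F)
    (a b : ℝ) : ContDiff ℝ 1 fun t => ∫ s in a..b, F (t, s) := by
  have hF' : Continuous fun p : ℝ × ℝ => fderiv ℝ F p (1, 0) :=
    (hF.continuous_fderiv one_ne_zero).clm_apply continuous_const
  refine contDiff_one_iff_deriv.2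
    ⟨fun t => (hasDerivAt_intervalIntegral_of_contDiff hF a b t).differentiableAt, ?_⟩
  rw [funext fun t => (hasDerivAt_intervalIntegral_of_contDiff hF a b t).deriv]
  fun_prop

theorem Continuous.contDiff_primitive [CompleteSpace E] {f : ℝ → E} (hf : Continuous f)
    (a : ℝ) : ContDiff ℝ 1 fun b => ∫ s in a..b, f s := by
  refine contDiff_one_iff_deriv.2
    ⟨fun b => (hf.integral_hasStrictDerivAt a b).hasDerivAt.differentiableAt, ?_⟩
  rwa [funext fun b => (hf.integral_hasStrictDerivAt a b).hasDerivAt.deriv]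

theorem contDiff_deriv_intervalIntegral_of_contDiff [CompleteSpace E] {F : ℝ × ℝ → E}
    (hF : ContDiff ℝ 1 F) (a t₀ : ℝ) :
    ContDiff ℝ 1 fun b => deriv (fun t => ∫ s in a..b, F (t, s)) t₀ := by
  rw [funext fun b => (hasDerivAt_intervalIntegral_of_contDiff hF a b t₀).deriv]
  exact Continuous.contDiff_primitive (by fun_prop) a

end

theorem contDiff_deriv_mul_intervalIntegral {f : ℝ → ℝ} {F : ℝ × ℝ → ℝ} (hf : ContDiff ℝ 1 f)
    (hF : ContDiff ℝ 1 F) (a t₀ : ℝ) :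
    ContDiff ℝ 1 fun b => deriv (fun t => f t * ∫ s in a..b, F (t, s)) t₀ := by
  simp_rw [← intervalIntegral.integral_const_mul]
  exact contDiff_deriv_intervalIntegral_of_contDiff (F := fun p => f p.1 * F p) (by fun_prop) a t₀

theorem integral_sub_depthMean {u : ℝ × ℝ × ℝ → ℝ} {x y : ℝ}
    (hu : IntervalIntegrable (fun s => u (x, y, s)) volume 0 1) :
    ∫ s in (0 : ℝ)..1, (u (x, y, s) - depthMean u x y) = 0 := by
  rw [integral_sub hu intervalIntegrable_const, intervalIntegral.integral_const, depthMean]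
  simp

section

variable {h : ℝ × ℝ → ℝ}

theorem hOmega_zero {x y : ℝ} (u v : ℝ × ℝ × ℝ → ℝ) : hOmega h u v x y 0 = 0 := by
  simp [hOmega]

theorem hOmega_one {x y : ℝ} {u v : ℝ × ℝ × ℝ → ℝ} (hu : Continuous u) (hv : Continuous v) :
    hOmega h u v x y 1 = 0 := by
  have hu₀ (x' : ℝ) : ∫ s in (0 : ℝ)..1, (u (x', y, s) - depthMean u x' y) = 0 :=
    integral_sub_depthMean ((hu.comp (by fun_prop)).intervalIntegrable 0 1)
  have hv₀ (y' : ℝ) : ∫ s in (0 : ℝ)..1, (v (x, y', s) - depthMean v x y') = 0 :=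
    integral_sub_depthMean ((hv.comp (by fun_prop)).intervalIntegrable 0 1)
  simp [hOmega, hu₀, hv₀]

theorem hMagC_zero {x y : ℝ} (a b : ℝ × ℝ × ℝ → ℝ) : hMagC h a b x y 0 = 0 := by
  simp [hMagC]

theorem hMagC_one {x y : ℝ} (a b : ℝ × ℝ × ℝ → ℝ) :
    hMagC h a b x y 1 = -(deriv (fun x' => h (x', y) * depthMean a x' y) x
      + deriv (fun y' => h (x, y') * depthMean b x y') y) := by
  unfold hMagC depthMean
  ring

theorem contDiff_hOmega (x y : ℝ) {u v : ℝ × ℝ × ℝ → ℝ} (hh : ContDiff ℝ 1 h)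
    (hu : ContDiff ℝ 1 u) (hv : ContDiff ℝ 1 v) : ContDiff ℝ 1 (hOmega h u v x y) := by
  have hum : ContDiff ℝ 1 fun t => depthMean u t y :=
    contDiff_intervalIntegral_of_contDiff (F := fun p => u (p.1, y, p.2)) (by fun_prop) 0 1
  have hvm : ContDiff ℝ 1 fun t => depthMean v x t :=
    contDiff_intervalIntegral_of_contDiff (F := fun p => v (x, p.1, p.2)) (by fun_prop) 0 1
  exact (contDiff_deriv_mul_intervalIntegral (F := fun p => u (p.1, y, p.2) - depthMean u p.1 y)
    (by fun_prop) (by fun_prop) 0 x).neg.sub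
    (contDiff_deriv_mul_intervalIntegral (F := fun p => v (x, p.1, p.2) - depthMean v x p.1)
    (by fun_prop) (by fun_prop) 0 y)

theorem contDiff_hMagC (x y : ℝ) {a b : ℝ × ℝ × ℝ → ℝ} (hh : ContDiff ℝ 1 h)
    (ha : ContDiff ℝ 1 a) (hb : ContDiff ℝ 1 b) : ContDiff ℝ 1 (hMagC h a b x y) :=
  (contDiff_deriv_mul_intervalIntegral (F := fun p => a (p.1, y, p.2))
    (by fun_prop) (by fun_prop) 0 x).neg.sub
    (contDiff_deriv_mul_intervalIntegral (F := fun p => b (x, p.1, p.2))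
    (by fun_prop) (by fun_prop) 0 y)

end

theorem vertical_coupling_depth_integrals_general
    (h : ℝ × ℝ → ℝ) (u v a b ψ : ℝ × ℝ × ℝ → ℝ)
    (hC1 : ContDiff ℝ 1 h)
    (uC1 : ContDiff ℝ 1 u) (vC1 : ContDiff ℝ 1 v)
    (aC1 : ContDiff ℝ 1 a) (bC1 : ContDiff ℝ 1 b)
    (ψC1 : ContDiff ℝ 1 ψ) :
    ∀ x y : ℝ,
      (∫ ζ in (0 : ℝ)..1,
          deriv (fun ζ' => ψ (x, y, ζ') * hOmega h u v x y ζ') ζ) = 0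
      ∧
      (∫ ζ in (0 : ℝ)..1,
          deriv (fun ζ' => ψ (x, y, ζ') * hMagC h a b x y ζ') ζ)
        = - ψ (x, y, 1) *
            (deriv (fun x' => h (x', y) * depthMean a x' y) x
              + deriv (fun y' => h (x, y') * depthMean b x y') y) := by
  intro x y
  have hψ : ContDiff ℝ 1 fun ζ => ψ (x, y, ζ) := by fun_prop
  constructor
  · rw [integral_deriv_of_contDiffOn_uIcc (hψ.mul (contDiff_hOmega x y hC1 uC1 vC1)).contDiffOn,
      hOmega_one uC1.continuous vC1.continuous, hOmega_zero]
    ring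
  · rw [integral_deriv_of_contDiffOn_uIcc (hψ.mul (contDiff_hMagC x y hC1 aC1 bC1)).contDiffOn,
      hMagC_one, hMagC_zero]
    ring

/-- Depth integrals of vertical-coupling flux terms:
(i) `∫₀¹ ∂_ζ(ψ·hω) dζ = 0`; and
(ii) `∫₀¹ ∂_ζ(ψ·h𝒞) dζ = −ψ|_{ζ=1}·(∂_x(h a_m) + ∂_y(h b_m))`
(the Godunov–Powell-type source term). -/
theorem vertical_coupling_depth_integrals
    (h : ℝ × ℝ → ℝ) (u v a b ψ : ℝ × ℝ × ℝ → ℝ)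
    (hC1 : ContDiff ℝ 1 h) (hpos : ∀ p : ℝ × ℝ, 0 < h p)
    (uC1 : ContDiff ℝ 1 u) (vC1 : ContDiff ℝ 1 v)
    (aC1 : ContDiff ℝ 1 a) (bC1 : ContDiff ℝ 1 b)
    (ψC1 : ContDiff ℝ 1 ψ) :
    ∀ x y : ℝ,
      (∫ ζ in (0 : ℝ)..1,
          deriv (fun ζ' => ψ (x, y, ζ') * hOmega h u v x y ζ') ζ) = 0
      ∧
      (∫ ζ in (0 : ℝ)..1,
          deriv (fun ζ' => ψ (x, y, ζ') * hMagC h a b x y ζ') ζ)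
        = - ψ (x, y, 1) *
            (deriv (fun x' => h (x', y) * depthMean a x' y) x
              + deriv (fun y' => h (x, y') * depthMean b x y') y) :=
  vertical_coupling_depth_integrals_general h u v a b ψ hC1 uC1 vC1 aC1 bC1 ψC1
end
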